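/- Let G = (V,E) be a finite acyclic directed graph with V = {1,…,n} and let s,t ∈ V. Using state variables x₁,…,xₙ and r, let φ₁ = ◇ⁿ⊤ ∧ □ⁿ⁺¹⊥ (n-fold ◇ applied to ⊤, and (n+1)-fold □ applied to ⊥) and φ₂ = ↓r.@_r◇↓x₁.⋯@_r◇↓xₙ.( ⋀_{(i,j)∈E} @_{x_i}◇x_j ∧ @_{x_t}◇x_s ). Then φ₁ ∧ φ₂ is satisfiable over the class of transitive frames if and only if there exists a topological ordering of (V,E) in which t appears before s. -/

import Mathlib

/-- Hybrid logic formulas over countable sets of atomic propositions,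
nominals and state variables (each indexed by `ℕ`). -/
inductive HForm : Type where
  | prop : ℕ → HForm
  | nom  : ℕ → HForm
  | svar : ℕ → HForm
  | top  : HForm
  | bot  : HForm
  | neg  : HForm → HForm
  | and  : HForm → HForm → HForm
  | or   : HForm → HForm → HForm
  | dia  : HForm → HForm
  | box  : HForm → HForm
  | bind : ℕ → HForm → HForm
  | atN  : ℕ → HForm → HForm
  | atV  : ℕ → HForm → HForm
deriving DecidableEq

/-- A (hybrid) Kripke structure: states, transition relation, labeling of
propositions by sets of states and of nominals by (single) states. -/
structure Kripke (W : Type) where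
  rel : W → W → Prop
  vProp : ℕ → Set W
  vNom : ℕ → W

/-- Update of an assignment: `updAsg g x w` is the `x`-variant of `g` mapping `x` to `w`. -/
def updAsg {W : Type} (g : ℕ → W) (x : ℕ) (w : W) : ℕ → W :=
  fun y => if y = x then w else g y

/-- The satisfaction relation `K, g, w ⊨ φ`. -/
def Sat {W : Type} (K : Kripke W) : (ℕ → W) → W → HForm → Prop
  | _, w, .prop p => w ∈ K.vProp p
  | _, w, .nom i => w = K.vNom i
  | g, w, .svar x => w = g x
  | _, _, .top => True
  | _, _, .bot => False
  | g, w, .neg φ => ¬ Sat K g w φ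
  | g, w, .and φ ψ => Sat K g w φ ∧ Sat K g w ψ
  | g, w, .or φ ψ => Sat K g w φ ∨ Sat K g w ψ
  | g, w, .dia φ => ∃ v, K.rel w v ∧ Sat K g v φ
  | g, w, .box φ => ∀ v, K.rel w v → Sat K g v φ
  | g, w, .bind x φ => Sat K (updAsg g x w) w φ
  | g, _, .atN i φ => Sat K g (K.vNom i) φ
  | g, _, .atV x φ => Sat K g (g x) φ

/-- Satisfiability over the class of all frames. -/
def SatisfiableAll (φ : HForm) : Prop :=
  ∃ (W : Type) (K : Kripke W) (g : ℕ → W) (w : W), Sat K g w φ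

/-- Satisfiability over the class of transitive frames. -/
def SatisfiableTrans (φ : HForm) : Prop :=
  ∃ (W : Type) (K : Kripke W), Transitive K.rel ∧ ∃ (g : ℕ → W) (w : W), Sat K g w φ

/-- Satisfiability over the class of total frames. -/
def SatisfiableTotal (φ : HForm) : Prop :=
  ∃ (W : Type) (K : Kripke W), (∀ w, ∃ v, K.rel w v) ∧ ∃ (g : ℕ → W) (w : W), Sat K g w φ

/-- Satisfiability over the class of ER frames. -/
def SatisfiableER (φ : HForm) : Prop :=
  ∃ (W : Type) (K : Kripke W), Equivalence K.rel ∧ ∃ (g : ℕ → W) (w : W), Sat K g w φ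

/-- The singleton reflexive Kripke structure `K₁` labeling every proposition and
nominal with its unique state. -/
def K1 : Kripke Unit := ⟨fun _ _ => True, fun _ => Set.univ, fun _ => ()⟩

/-- The assignment `g₁` mapping every state variable to the unique state of `K₁`. -/
def g1 : ℕ → Unit := fun _ => ()

/-- Unary operators of hybrid logic: `◇`, `□`, `↓x.`, `@_i` (nominal), `@_x` (state variable). -/
inductive HOp : Type where
  | dia : HOp
  | box : HOp
  | bind : ℕ → HOp
  | atN : ℕ → HOp
  | atV : ℕ → HOp
deriving DecidableEq

def applyOp : HOp → HForm → HForm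
  | .dia, φ => .dia φ
  | .box, φ => .box φ
  | .bind x, φ => .bind x φ
  | .atN i, φ => .atN i φ
  | .atV x, φ => .atV x φ

/-- Apply a sequence of operators to a formula (head of the list outermost). -/
def applyOps : List HOp → HForm → HForm
  | [], φ => φ
  | o :: os, φ => applyOp o (applyOps os φ)

/-!
On a transitive frame, a model of `φ₁ ∧ φ₂` names `n` successors of the root realising every
edge together with the extra edge `(t, s)`. Since `□ⁿ⁺¹⊥` rules out reflexive successors of the
root, the frame relation pulled back to the vertices is a strict order, and any linear extension
of it is a topological ordering with `t` before `s`. Conversely, a topological ordering `pos` is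
realised in the chain `0 < 1 < ⋯ < n` by sending vertex `i` to `pos i + 1`; at `0` this chain
satisfies `◇ⁿ⊤ ∧ □ⁿ⁺¹⊥`.
-/


section Semantics

variable {W : Type} (K : Kripke W)

theorem sat_foldr_and_iff {α : Type*} (φ : α → HForm) (base : HForm) (L : List α)
    (g : ℕ → W) (w : W) :
    Sat K g w (L.foldr (fun a acc => .and (φ a) acc) base) ↔
      (∀ a ∈ L, Sat K g w (φ a)) ∧ Sat K g w base := by
  induction L with
  | nil => simp
  | cons a L ih => simp only [List.foldr_cons, Sat, ih, List.forall_mem_cons, and_assoc]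

theorem sat_atV_dia_svar_iff (x y : ℕ) (g : ℕ → W) (w : W) :
    Sat K g w (.atV x (.dia (.svar y))) ↔ K.rel (g x) (g y) := by
  simp [Sat]

/-- The formula here is `@_r◇↓x₁.⋯@_r◇↓x_k.ψ` for `L = [x₁, …, x_k]`; since each `@_r` moves the
evaluation point, only a `ψ` insensitive to the current state can be pulled out. -/
theorem sat_applyOps_bindSuccessors_iff {r : ℕ} {ψ : HForm}
    (hψ : ∀ g v v', Sat K g v ψ → Sat K g v' ψ) {L : List ℕ} (hr : r ∉ L) (g : ℕ → W) (w : W) :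
    Sat K g w (applyOps (L.flatMap fun x => [.atV r, .dia, .bind x]) ψ) ↔
      ∃ g' : ℕ → W, (∀ y ∉ L, g' y = g y) ∧ (∀ x ∈ L, K.rel (g r) (g' x)) ∧ Sat K g' w ψ := by
  induction L generalizing g w with
  | nil =>
    refine ⟨fun h => ⟨g, fun _ _ => rfl, by simp, h⟩, ?_⟩
    rintro ⟨g', hout, -, h⟩
    rwa [funext fun y => hout y List.not_mem_nil] at h
  | cons x L ih =>
    obtain ⟨hrx, hrL⟩ := not_or.1 (List.mem_cons.not.1 hr)
    have hupd_r (v : W) : updAsg g x v r = g r := if_neg hrx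
    simp only [List.flatMap_cons, List.cons_append, List.nil_append, applyOps, applyOp, Sat,
      ih hrL, hupd_r, List.forall_mem_cons]
    constructor
    · rintro ⟨v, hv, g', hout, hin, hg'⟩
      refine ⟨g', fun y hy => ?_, ⟨?_, hin⟩, hψ _ _ _ hg'⟩
      · rw [List.mem_cons, not_or] at hy
        rw [hout y hy.2, updAsg, if_neg hy.1]
      · by_cases hxL : x ∈ L
        · exact hin x hxL
        · rwa [hout x hxL, updAsg, if_pos rfl]
    · rintro ⟨g', hout, ⟨hx, hin⟩, hg'⟩
      refine ⟨g' x, hx, g', fun y hy => ?_, hin, hψ _ _ _ hg'⟩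
      by_cases hyx : y = x
      · rw [hyx, updAsg, if_pos rfl]
      · rw [hout y (by simp [hyx, hy]), updAsg, if_neg hyx]

theorem not_rel_self_of_sat_box_iterate_bot {k : ℕ} {g : ℕ → W} {w u : W}
    (h : Sat K g w (HForm.box^[k + 1] .bot)) (hwu : K.rel w u) : ¬ K.rel u u := by
  induction k generalizing w with
  | zero => exact fun _ => h u hwu
  | succ k ih =>
    rw [Function.iterate_succ_apply'] at h
    exact fun huu => ih (h u hwu) huu huu

end Semantics

def chainModel (m : ℕ) : Kripke (Fin (m + 1)) := ⟨(· < ·), fun _ => ∅, fun _ => 0⟩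

theorem chainModel_sat_dia_iterate_top {m k : ℕ} (g : ℕ → Fin (m + 1)) {w : Fin (m + 1)}
    (h : (w : ℕ) + k ≤ m) : Sat (chainModel m) g w (HForm.dia^[k] .top) := by
  induction k generalizing w with
  | zero => trivial
  | succ k ih =>
    rw [Function.iterate_succ_apply']
    exact ⟨⟨w + 1, by omega⟩, Fin.mk_lt_of_lt_val (by simp), ih (by simp; omega)⟩

theorem chainModel_sat_box_iterate_bot {m k : ℕ} (g : ℕ → Fin (m + 1)) {w : Fin (m + 1)}
    (h : m < (w : ℕ) + k) : Sat (chainModel m) g w (HForm.box^[k] .bot) := by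
  induction k generalizing w with
  | zero => omega
  | succ k ih =>
    rw [Function.iterate_succ_apply']
    exact fun v (hv : w < v) => ih (by rw [Fin.lt_def] at hv; omega)

theorem exists_equiv_fin_of_isStrictOrder {α : Type*} [Fintype α] {n : ℕ}
    (hn : Fintype.card α = n) (r : α → α → Prop) [IsStrictOrder α r] :
    ∃ e : α ≃ Fin n, ∀ a b, r a b → e a < e b := by
  let := partialOrderOfSO r
  let : Fintype (LinearExtension α) := ‹Fintype α›
  let e := (Fintype.orderIsoFinOfCardEq (LinearExtension α) hn).symm
  exact ⟨e.toEquiv, fun a b hab =>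
    e.strictMono (toLinearExtension.monotone.strictMono_of_injective (fun _ _ h => h) hab)⟩

def edgesFormula {n : ℕ} (E : List (Fin n × Fin n)) (s t : Fin n) : HForm :=
  E.foldr (fun e acc => HForm.and (HForm.atV (e.1 : ℕ) (HForm.dia (HForm.svar (e.2 : ℕ)))) acc)
    (HForm.atV (t : ℕ) (HForm.dia (HForm.svar (s : ℕ))))

/-- The formula `φ₂`: vertex `i` is named by the state variable `i`, and `r` is the variable `n`. -/
def graphFormula (n : ℕ) (E : List (Fin n × Fin n)) (s t : Fin n) : HForm :=
  applyOps (HOp.bind n :: (List.finRange n).flatMap (fun i => [HOp.atV n, HOp.dia, HOp.bind i.val]))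
    (edgesFormula E s t)

section Graph

variable {W : Type} (K : Kripke W) {n : ℕ} (E : List (Fin n × Fin n)) (s t : Fin n)

theorem sat_edgesFormula_iff (g : ℕ → W) (w : W) :
    Sat K g w (edgesFormula E s t) ↔ (∀ e ∈ E, K.rel (g e.1) (g e.2)) ∧ K.rel (g t) (g s) := by
  simp only [edgesFormula, sat_foldr_and_iff, sat_atV_dia_svar_iff]

theorem sat_graphFormula_iff (g : ℕ → W) (w : W) :
    Sat K g w (graphFormula n E s t) ↔
      ∃ f : Fin n → W, (∀ i, K.rel w (f i)) ∧ (∀ e ∈ E, K.rel (f e.1) (f e.2)) ∧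
        K.rel (f t) (f s) := by
  have hrange : (List.finRange n).flatMap (fun i => [HOp.atV n, HOp.dia, HOp.bind i.val]) =
      (List.range n).flatMap (fun x => [HOp.atV n, HOp.dia, HOp.bind x]) := by
    rw [← List.map_coe_finRange_eq_range, List.flatMap_map]
  have hupd_n : updAsg g n w n = w := if_pos rfl
  simp only [graphFormula, applyOps, applyOp, Sat]
  rw [hrange, sat_applyOps_bindSuccessors_iff K
    (fun g v v' => by simp only [sat_edgesFormula_iff, imp_self]) List.not_mem_range_self]
  simp only [sat_edgesFormula_iff, List.mem_range, hupd_n]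
  constructor
  · rintro ⟨g', -, hw, hE, hts⟩
    exact ⟨fun i => g' i, fun i => hw i i.isLt, hE, hts⟩
  · rintro ⟨f, hw, hE, hts⟩
    refine ⟨fun y => if h : y < n then f ⟨y, h⟩ else updAsg g n w y, fun y hy => by simp [hy],
      fun x hx => by simpa [hx] using hw ⟨x, hx⟩, fun e he => by simpa using hE e he, by simpa⟩

end Graph

theorem unreachability_reduction_general (n : ℕ) (E : List (Fin n × Fin n)) (s t : Fin n) :
    SatisfiableTrans
      (HForm.and
        (HForm.and (HForm.dia^[n] HForm.top) (HForm.box^[n + 1] HForm.bot))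
        (applyOps
          (HOp.bind n ::
            (List.finRange n).flatMap (fun i => [HOp.atV n, HOp.dia, HOp.bind i.val]))
          (E.foldr
            (fun e acc => HForm.and (HForm.atV (e.1 : ℕ) (HForm.dia (HForm.svar (e.2 : ℕ)))) acc)
            (HForm.atV (t : ℕ) (HForm.dia (HForm.svar (s : ℕ))))))) ↔
      ∃ pos : Fin n → Fin n, Function.Bijective pos ∧
        (∀ e ∈ E, pos e.1 < pos e.2) ∧ pos t < pos s := by
  constructor
  · rintro ⟨W, K, htrans, g, w, ⟨-, hbox⟩, hgraph⟩
    obtain ⟨f, hwf, hE, hts⟩ := (sat_graphFormula_iff K E s t g w).1 hgraph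
    have : IsStrictOrder (Fin n) (fun a b => K.rel (f a) (f b)) :=
      { irrefl := fun a => not_rel_self_of_sat_box_iterate_bot K hbox (hwf a)
        trans := fun _ _ _ => @htrans _ _ _ }
    obtain ⟨e, he⟩ :=
      exists_equiv_fin_of_isStrictOrder (Fintype.card_fin n) (fun a b => K.rel (f a) (f b))
    exact ⟨e, e.bijective, fun x hx => he _ _ (hE x hx), he _ _ hts⟩
  · rintro ⟨pos, -, hE, hts⟩
    refine ⟨Fin (n + 1), chainModel n, fun _ _ _ => lt_trans, fun _ => 0, 0,
      ⟨chainModel_sat_dia_iterate_top _ (by simp), chainModel_sat_box_iterate_bot _ (by simp)⟩,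
      (sat_graphFormula_iff _ E s t _ _).2 ⟨fun i => (pos i).succ, fun i => (pos i).succ_pos,
        fun x hx => Fin.succ_lt_succ_iff.2 (hE x hx), Fin.succ_lt_succ_iff.2 hts⟩⟩

/-- For a finite acyclic directed graph on vertices `Fin n` with
edge list `E` and `s t : Fin n`, the formula `φ₁ ∧ φ₂` with
`φ₁ = ◇ⁿ⊤ ∧ □ⁿ⁺¹⊥` and
`φ₂ = ↓r.@_r◇↓x₁.⋯@_r◇↓xₙ.(⋀_{(i,j)∈E} @_{x_i}◇x_j ∧ @_{x_t}◇x_s)`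
(the vertex `i` uses the state variable `i`, and `r` is the state variable `n`)
is satisfiable over the class of transitive frames iff there is a topological
ordering of the graph in which `t` appears before `s`. -/
theorem unreachability_reduction (n : ℕ) (E : List (Fin n × Fin n)) (s t : Fin n)
    (hacyc : ∀ a : Fin n, ¬ Relation.TransGen (fun a b => (a, b) ∈ E) a a) :
    SatisfiableTrans
      (HForm.and
        (HForm.and (HForm.dia^[n] HForm.top) (HForm.box^[n + 1] HForm.bot))
        (applyOps
          (HOp.bind n ::
            (List.finRange n).flatMap (fun i => [HOp.atV n, HOp.dia, HOp.bind i.val]))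
          (E.foldr
            (fun e acc => HForm.and (HForm.atV (e.1 : ℕ) (HForm.dia (HForm.svar (e.2 : ℕ)))) acc)
            (HForm.atV (t : ℕ) (HForm.dia (HForm.svar (s : ℕ))))))) ↔
      ∃ pos : Fin n → Fin n, Function.Bijective pos ∧
        (∀ e ∈ E, pos e.1 < pos e.2) ∧ pos t < pos s :=
  unreachability_reduction_general n E s t
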